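/- arXiv:2604.11746 — 2 statements merged into one kernel-verified Lean document; each statement's English description precedes it below -/
import Mathlib

section
/- Let u ∈ ℝ, b > 0, and assume M : ℝ×ℝ → ℝ is twice differentiable with continuous second derivative M′′ ≥ 0 (with respect to the first argument) and continuous cross derivative ∂₁₂M. Then the map v ↦ prox_{bM(·,v)}(u) is differentiable with derivative ∂_v prox_{bM(·,v)}(u) = −b·∂₁₂M(prox_{bM(·,v)}(u), v) / (b·M′′(prox_{bM(·,v)}(u), v) + 1), and consequently v ↦ prox_{bM(·,v)}(u) is Lipschitz continuous with Lipschitz constant sup_{v∈ℝ} |b·∂₁₂M(prox_{bM(·,v)}(u), v) / (b·M′′(prox_{bM(·,v)}(u), v) + 1)| (provided this supremum is finite). -/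
open scoped NNReal Topology
open Filter Set

noncomputable section

/-! The minimizer `P v` is characterized by the stationarity equation
`b M₁(P v, v) + P v - u = 0`. The mean value theorem, applied in each variable separately,
turns the difference of this equation at `w` and at `v` into
`(P w - P v) (b M''(ξ, w) + 1) = -b ∂₁₂M(P v, η) (w - v)` with `ξ` between `P v` and `P w`
and `η` between `v` and `w`. As `M'' ≥ 0`, the factor on the left is at least `1`; this makes
`P` continuous, hence `ξ → P v` and `η → v` as `w → v`, and the difference quotient converges.
The Lipschitz bound is then the mean value inequality. -/

theorem exists_mem_uIcc_sub_eq_mul_sub {f f' : ℝ → ℝ} (hf : ∀ x, HasDerivAt f (f' x) x)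
    (a b : ℝ) : ∃ c ∈ uIcc a b, f b - f a = f' c * (b - a) := by
  wlog hab : a ≤ b generalizing a b
  · obtain ⟨c, hc, h⟩ := this b a (le_of_not_ge hab)
    exact ⟨c, uIcc_comm a b ▸ hc, by linear_combination -h⟩
  rcases hab.eq_or_lt with rfl | hlt
  · exact ⟨a, left_mem_uIcc, by simp⟩
  obtain ⟨c, hc, h⟩ := exists_hasDerivAt_eq_slope f f' hlt
    (fun x _ => (hf x).continuousAt.continuousWithinAt) (fun x _ => hf x)
  refine ⟨c, Icc_subset_uIcc (Ioo_subset_Icc_self hc), ?_⟩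
  rw [h, div_mul_cancel₀ _ (sub_ne_zero.2 hlt.ne')]

theorem Filter.Tendsto.of_mem_uIcc {α β : Type*} [LinearOrder β] [TopologicalSpace β]
    [OrderTopology β] {l : Filter α} {f g h : α → β} {x : β} (hf : Tendsto f l (𝓝 x))
    (hg : Tendsto g l (𝓝 x)) (hh : ∀ a, h a ∈ uIcc (f a) (g a)) : Tendsto h l (𝓝 x) := by
  exact tendsto_of_tendsto_of_tendsto_of_le_of_le (by simpa using hf.min hg)
    (by simpa using hf.max hg) (fun a => (hh a).1) (fun a => (hh a).2)

theorem prox_optimality_condition {f : ℝ → ℝ} {f' u b x : ℝ} (hf : HasDerivAt f f' x)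
    (hx : ∀ s, b * f x + (x - u) ^ 2 / 2 ≤ b * f s + (s - u) ^ 2 / 2) :
    b * f' + (x - u) = 0 := by
  have hobj : HasDerivAt (fun s => b * f s + (s - u) ^ 2 / 2) (b * f' + (x - u)) x :=
    ((hf.const_mul b).add ((((hasDerivAt_id' x).sub_const u).fun_pow 2).div_const 2)).congr_deriv
      (by ring)
  exact IsLocalMin.hasDerivAt_eq_zero (Eventually.of_forall hx) hobj

section ImplicitFunction

variable {F A B : ℝ → ℝ → ℝ} {P : ℝ → ℝ} {c : ℝ}

theorem exists_implicit_increment (hA : ∀ t v, HasDerivAt (F · v) (A t v) t)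
    (hB : ∀ t v, HasDerivAt (F t ·) (B t v) v) (hP : ∀ v, F (P v) v = 0) (v w : ℝ) :
    ∃ ξ ∈ uIcc (P v) (P w), ∃ η ∈ uIcc v w, (P w - P v) * A ξ w = -B (P v) η * (w - v) := by
  obtain ⟨ξ, hξ, hξeq⟩ := exists_mem_uIcc_sub_eq_mul_sub (hA · w) (P v) (P w)
  obtain ⟨η, hη, hηeq⟩ := exists_mem_uIcc_sub_eq_mul_sub (hB (P v)) v w
  refine ⟨ξ, hξ, η, hη, ?_⟩
  linear_combination hP w - hP v - hξeq - hηeq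

theorem tendsto_implicit (hA : ∀ t v, HasDerivAt (F · v) (A t v) t)
    (hB : ∀ t v, HasDerivAt (F t ·) (B t v) v) (hBc : ∀ t, Continuous (B t)) (hc : 0 < c)
    (hAge : ∀ t v, c ≤ A t v) (hP : ∀ v, F (P v) v = 0) (v : ℝ) :
    Tendsto P (𝓝 v) (𝓝 (P v)) := by
  choose ξ _ η hη heq using exists_implicit_increment hA hB hP v
  have hbound : ∀ w, |P w - P v| ≤ |B (P v) (η w)| * |w - v| / c := fun w => by
    rw [le_div_iff₀ hc]
    calc |P w - P v| * c ≤ |P w - P v| * |A (ξ w) w| := by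
          gcongr; exact (hAge _ _).trans (le_abs_self _)
      _ = |B (P v) (η w)| * |w - v| := by rw [← abs_mul, heq w, abs_mul, abs_neg]
  have hη_lim : Tendsto η (𝓝 v) (𝓝 v) := tendsto_const_nhds.of_mem_uIcc tendsto_id hη
  have hbound_lim : Tendsto (fun w => |B (P v) (η w)| * |w - v| / c) (𝓝 v) (𝓝 0) := by
    simpa using ((((hBc (P v)).tendsto v).comp hη_lim).abs.mul
      (tendsto_id.sub_const v).abs).div_const c
  rw [tendsto_iff_norm_sub_tendsto_zero]
  exact squeeze_zero (fun _ => norm_nonneg _) hbound hbound_lim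

theorem hasDerivAt_implicit (hA : ∀ t v, HasDerivAt (F · v) (A t v) t)
    (hB : ∀ t v, HasDerivAt (F t ·) (B t v) v) (hAc : Continuous fun tv : ℝ × ℝ => A tv.1 tv.2)
    (hBc : ∀ t, Continuous (B t)) (hc : 0 < c) (hAge : ∀ t v, c ≤ A t v)
    (hP : ∀ v, F (P v) v = 0) (v : ℝ) : HasDerivAt P (-B (P v) v / A (P v) v) v := by
  choose ξ hξ η hη heq using exists_implicit_increment hA hB hP v
  have hξ_lim : Tendsto ξ (𝓝 v) (𝓝 (P v)) :=
    tendsto_const_nhds.of_mem_uIcc (tendsto_implicit hA hB hBc hc hAge hP v) hξ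
  have hη_lim : Tendsto η (𝓝 v) (𝓝 v) := tendsto_const_nhds.of_mem_uIcc tendsto_id hη
  have hA_lim : Tendsto (fun w => A (ξ w) w) (𝓝 v) (𝓝 (A (P v) v)) :=
    (hAc.tendsto (P v, v)).comp (hξ_lim.prodMk_nhds tendsto_id)
  have hB_lim := ((hBc (P v)).tendsto v).comp hη_lim
  have hA_ne : ∀ t w, A t w ≠ 0 := fun t w => (hc.trans_le (hAge t w)).ne'
  rw [hasDerivAt_iff_tendsto_slope]
  refine ((hB_lim.neg.div hA_lim (hA_ne _ _)).mono_left nhdsWithin_le_nhds).congr' ?_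
  filter_upwards [self_mem_nhdsWithin] with w hw
  simp only [Pi.div_apply, Function.comp_apply, slope_def_field]
  rw [div_eq_div_iff (hA_ne _ _) (sub_ne_zero.2 hw)]
  linear_combination -heq w

end ImplicitFunction

theorem lipschitzWith_of_hasDerivAt_abs_le {f f' : ℝ → ℝ} {K : ℝ≥0}
    (hf : ∀ x, HasDerivAt f (f' x) x) (hK : ∀ x, |f' x| ≤ K) : LipschitzWith K f :=
  lipschitzWith_of_nnnorm_deriv_le (fun x => (hf x).differentiableAt) fun x => by
    rw [(hf x).deriv, ← NNReal.coe_le_coe, coe_nnnorm, Real.norm_eq_abs]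
    exact hK x

/-- Proposition: derivative of the proximal operator with
respect to the response. Assume M is twice differentiable with continuous,
nonnegative second derivative M′′ (in the first argument) and continuous cross
derivative ∂₁₂M. For fixed u ∈ ℝ and b > 0, let P v := prox_{bM(·,v)}(u) be
the minimizer of t ↦ b·M(t, v) + (t − u)²/2. Then P is differentiable with
  P′(v) = −b·∂₁₂M(P v, v) / (b·M′′(P v, v) + 1),
and consequently P is Lipschitz with constant
sup_v |b·∂₁₂M(P v, v)/(b·M′′(P v, v) + 1)| (provided it is finite). -/
theorem prox_hasDerivAt_response (M M1 M2 M12 : ℝ → ℝ → ℝ) (u b : ℝ) (hb : 0 < b)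
    (hM1 : ∀ t v, HasDerivAt (fun s => M s v) (M1 t v) t)
    (hM2 : ∀ t v, HasDerivAt (fun s => M1 s v) (M2 t v) t)
    (hM2cont : Continuous fun tv : ℝ × ℝ => M2 tv.1 tv.2)
    (hM2nonneg : ∀ t v, 0 ≤ M2 t v)
    (hM12 : ∀ t v, HasDerivAt (fun w => M1 t w) (M12 t v) v)
    (hM12cont : Continuous fun tv : ℝ × ℝ => M12 tv.1 tv.2)
    (P : ℝ → ℝ)
    (hP : ∀ v s, b * M (P v) v + (P v - u) ^ 2 / 2 ≤ b * M s v + (s - u) ^ 2 / 2) :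
    (∀ v, HasDerivAt P (-(b * M12 (P v) v) / (b * M2 (P v) v + 1)) v) ∧
    (∀ K : ℝ≥0, (∀ v, |b * M12 (P v) v / (b * M2 (P v) v + 1)| ≤ K) →
      LipschitzWith K P) := by
  have hstat : ∀ v, b * M1 (P v) v + (P v - u) = 0 := fun v =>
    prox_optimality_condition (hM1 (P v) v) (hP v)
  have hderiv : ∀ v, HasDerivAt P (-(b * M12 (P v) v) / (b * M2 (P v) v + 1)) v :=
    hasDerivAt_implicit (F := fun t v => b * M1 t v + (t - u))
      (fun t v => ((hM2 t v).const_mul b).add ((hasDerivAt_id' t).sub_const u))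
      (fun t v => ((hM12 t v).const_mul b).add_const (t - u))
      (by fun_prop) (fun t => by fun_prop) one_pos
      (fun t v => by nlinarith [hM2nonneg t v]) hstat
  refine ⟨hderiv, fun K hK => lipschitzWith_of_hasDerivAt_abs_le hderiv fun v => ?_⟩
  rw [neg_div, abs_neg]
  exact hK v
end
end

section
/- Let u, v ∈ ℝ, b > 0, and assume M : ℝ×ℝ → ℝ is twice differentiable with continuous second derivative satisfying 0 ≤ M′′ ≤ B₁₁ and continuous cross derivative satisfying |∂₁₂M| ≤ B₁₂, for some nonnegative constants B₁₁, B₁₂. Then |M′(prox_{bM(·,v)}(u), v)| ≤ |M′(0, 0)| + B₁₁|u| + B₁₂|v|. -/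
/-!
At the proximal point `x` the optimality condition reads `x + b M′(x, v) = u`. Since
`M′(·, v)` is nondecreasing, `M′(u, v)` lies on the same side of zero as `M′(x, v)` and
further from it, so `|M′(x, v)| ≤ |M′(u, v)|`. The bounds on `∂₁₂M` and `M′′` then move
`(u, v)` to `(u, 0)` and `(u, 0)` to `(0, 0)` by the mean value inequality.
-/

noncomputable section

-- `IsProx f b u x` says `x = prox_{b f}(u)`.
def IsProx (f : ℝ → ℝ) (b u x : ℝ) : Prop :=
  IsMinOn (fun s => b * f s + (s - u) ^ 2 / 2) Set.univ x

theorem IsProx.add_mul_eq {f : ℝ → ℝ} {b u x f' : ℝ} (hx : IsProx f b u x)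
    (hf : HasDerivAt f f' x) : x + b * f' = u := by
  have hderiv : HasDerivAt (fun s => b * f s + (s - u) ^ 2 / 2) (b * f' + (x - u)) x := by
    have hsq : HasDerivAt (fun s => (s - u) ^ 2 / 2) (x - u) x :=
      ((((hasDerivAt_id' x).sub_const u).fun_pow 2).div_const 2).congr_deriv (by norm_num)
    exact (hf.const_mul b).fun_add hsq
  have := (hx.isLocalMin Filter.univ_mem).hasDerivAt_eq_zero hderiv
  linarith

theorem abs_sub_le_of_hasDerivAt_of_abs_le {f f' : ℝ → ℝ} {C : ℝ}
    (hf : ∀ t, HasDerivAt f (f' t) t) (hC : ∀ t, |f' t| ≤ C) (a b : ℝ) :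
    |f a - f b| ≤ C * |a - b| := by
  simpa [Real.norm_eq_abs] using convex_univ.norm_image_sub_le_of_norm_hasDerivWithin_le
    (fun t _ => (hf t).hasDerivWithinAt) (fun t _ => hC t) (Set.mem_univ b) (Set.mem_univ a)

theorem Monotone.abs_le_abs_of_add_mul_eq {f : ℝ → ℝ} (hf : Monotone f) {b x u : ℝ}
    (hb : 0 ≤ b) (hu : x + b * f x = u) : |f x| ≤ |f u| := by
  rcases le_total 0 (f x) with hfx | hfx
  · have : f x ≤ f u := hf (by nlinarith)
    exact abs_le_abs (by linarith) (by linarith)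
  · have : f u ≤ f x := hf (by nlinarith)
    exact abs_le_abs_of_nonpos hfx (by linarith)

theorem M_deriv_prox_bound_general (M M1 M2 M12 : ℝ → ℝ → ℝ)
    (u v b B11 B12 : ℝ) (hb : 0 < b)
    (hM1 : ∀ t w, HasDerivAt (fun s => M s w) (M1 t w) t)
    (hM2 : ∀ t w, HasDerivAt (fun s => M1 s w) (M2 t w) t)
    (hM2rng : ∀ t w, 0 ≤ M2 t w ∧ M2 t w ≤ B11)
    (hM12 : ∀ t w, HasDerivAt (fun s => M1 t s) (M12 t w) w)
    (hM12bd : ∀ t w, |M12 t w| ≤ B12)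
    (x : ℝ)
    (hx : ∀ s, b * M x v + (x - u) ^ 2 / 2 ≤ b * M s v + (s - u) ^ 2 / 2) :
    |M1 x v| ≤ |M1 0 0| + B11 * |u| + B12 * |v| := by
  have hprox : IsProx (M · v) b u x := fun s _ => hx s
  have hmono : Monotone (M1 · v) :=
    monotone_of_hasDerivAt_nonneg (hM2 · v) fun t => (hM2rng t v).1
  have hM2abs : ∀ t, |M2 t 0| ≤ B11 := fun t =>
    abs_le.2 ⟨by linarith [hM2rng t 0], (hM2rng t 0).2⟩
  have hvary_w := abs_sub_le_of_hasDerivAt_of_abs_le (hM12 u) (hM12bd u) v 0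
  have hvary_t := abs_sub_le_of_hasDerivAt_of_abs_le (hM2 · 0) hM2abs u 0
  simp only [sub_zero] at hvary_w hvary_t
  calc |M1 x v| ≤ |M1 u v| := hmono.abs_le_abs_of_add_mul_eq hb.le (hprox.add_mul_eq (hM1 x v))
    _ ≤ |M1 u 0| + B12 * |v| := by linarith [abs_sub_abs_le_abs_sub (M1 u v) (M1 u 0)]
    _ ≤ |M1 0 0| + B11 * |u| + B12 * |v| := by
        linarith [abs_sub_abs_le_abs_sub (M1 u 0) (M1 0 0)]

/-- Proposition: a bound on M′ at the proximal point.
Assume M is twice differentiable with continuous second derivative satisfying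
0 ≤ M′′ ≤ B₁₁ and continuous cross derivative satisfying |∂₁₂M| ≤ B₁₂. Then
for u, v ∈ ℝ and b > 0, with x := prox_{bM(·,v)}(u),
  |M′(x, v)| ≤ |M′(0, 0)| + B₁₁|u| + B₁₂|v|. -/
theorem M_deriv_prox_bound (M M1 M2 M12 : ℝ → ℝ → ℝ)
    (u v b B11 B12 : ℝ) (hb : 0 < b)
    (hB11 : 0 ≤ B11) (hB12 : 0 ≤ B12)
    (hM1 : ∀ t w, HasDerivAt (fun s => M s w) (M1 t w) t)
    (hM2 : ∀ t w, HasDerivAt (fun s => M1 s w) (M2 t w) t)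
    (hM2cont : Continuous fun tw : ℝ × ℝ => M2 tw.1 tw.2)
    (hM2rng : ∀ t w, 0 ≤ M2 t w ∧ M2 t w ≤ B11)
    (hM12 : ∀ t w, HasDerivAt (fun s => M1 t s) (M12 t w) w)
    (hM12cont : Continuous fun tw : ℝ × ℝ => M12 tw.1 tw.2)
    (hM12bd : ∀ t w, |M12 t w| ≤ B12)
    (x : ℝ)
    (hx : ∀ s, b * M x v + (x - u) ^ 2 / 2 ≤ b * M s v + (s - u) ^ 2 / 2) :
    |M1 x v| ≤ |M1 0 0| + B11 * |u| + B12 * |v| :=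
  M_deriv_prox_bound_general M M1 M2 M12 u v b B11 B12 hb hM1 hM2 hM2rng hM12 hM12bd x hx

end
end
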